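/- Let A be symmetric positive definite, B symmetric positive semidefinite with B ⪯ A, and λ > 0. Then the matrix D := (I − (A+λI)^{-1/2} B (A+λI)^{-1/2})^{-1} − I is well-defined (the inverse exists) and has eigenvalues bounded between 0 and σ/λ, where σ is the largest eigenvalue of A. -/

import Mathlib

open Matrix

section OldSqrt

open scoped ComplexOrder

/-- The positive semidefinite square root of a positive semidefinite matrix, as defined in
the older Mathlib (removed since). -/
noncomputable def Matrix.PosSemidef.sqrt {n : Type*} [Fintype n] [DecidableEq n] {𝕜 : Type*}
    [RCLike 𝕜] {A : Matrix n n 𝕜} (hA : A.PosSemidef) : Matrix n n 𝕜 :=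
  hA.1.eigenvectorUnitary.1 * diagonal ((↑) ∘ (fun x => Real.sqrt x) ∘ hA.1.eigenvalues) *
    (star hA.1.eigenvectorUnitary : Matrix n n 𝕜)

end OldSqrt

/-!
Put `P = A + λ` and `M = 1 - P^{-1/2} B P^{-1/2} = P^{-1/2} (P - B) P^{-1/2}`. Congruence by
`P^{-1/2}` turns `0 ≤ B` into `M ≤ 1`, and
`(σ + λ) (P - B) - λ P = (σ + λ) (A - B) + λ (σ - A) ≥ 0` into `λ / (σ + λ) ≤ M`.
So the spectrum of `M` lies in `[λ / (σ + λ), 1]`; in particular `M` is invertible, and the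
spectrum of `M⁻¹ - 1` lies in `[0, (σ + λ) / λ - 1] = [0, σ / λ]`.
-/

open Set
open scoped MatrixOrder ComplexOrder

section Spectrum

variable {R A : Type*} [Field R] [LinearOrder R] [IsStrictOrderedRing R] [Ring A] [Algebra R A]

lemma spectrum_inv_sub_one_subset_Icc (u : Aˣ) {c : R} (hc : 0 < c)
    (hu : spectrum R (u : A) ⊆ Icc c 1) :
    spectrum R ((↑u⁻¹ : A) - 1) ⊆ Icc 0 (c⁻¹ - 1) := by
  rw [← map_one (algebraMap R A), ← spectrum.sub_singleton_eq, ← spectrum.map_inv]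
  rintro _ ⟨ν, hν, _, rfl, rfl⟩
  obtain ⟨hcν, hν1⟩ := hu (Set.mem_inv.mp hν)
  have hν0 : 0 < ν⁻¹ := hc.trans_le hcν
  have h1 : 1 ≤ ν := by simpa using (one_le_inv₀ hν0).mpr hν1
  have h2 : ν ≤ c⁻¹ := by simpa using (inv_le_inv₀ hν0 hc).mpr hcν
  exact ⟨sub_nonneg.mpr h1, sub_le_sub_right h2 1⟩

end Spectrum

section ContinuousFunctionalCalculus

variable {A : Type*} [Ring A] [StarRing A] [PartialOrder A] [StarOrderedRing A]
  [TopologicalSpace A] [Algebra ℝ A] [StarModule ℝ A]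
  [ContinuousFunctionalCalculus ℝ A IsSelfAdjoint] [NonnegSpectrumClass ℝ A]

lemma spectrum_subset_Icc_of_le {a : A} {c d : ℝ} (hc : algebraMap ℝ A c ≤ a)
    (hd : a ≤ algebraMap ℝ A d) : spectrum ℝ a ⊆ Icc c d := by
  have ha : IsSelfAdjoint a := by
    simpa using (IsSelfAdjoint.of_nonneg (sub_nonneg.mpr hc)).add (.algebraMap A (.all c))
  exact fun x hx => ⟨(algebraMap_le_iff_le_spectrum ha).mp hc x hx,
    (le_algebraMap_iff_spectrum_le ha).mp hd x hx⟩

end ContinuousFunctionalCalculus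

namespace Matrix

variable {n : Type*} [Fintype n] [DecidableEq n]

lemma PosSemidef.sqrt_eq_cfcSqrt {𝕜 : Type*} [RCLike 𝕜] {A : Matrix n n 𝕜}
    (hA : A.PosSemidef) : hA.sqrt = CFC.sqrt A := by
  rw [CFC.sqrt_eq_cfc, cfc_nnreal_eq_real _ A, hA.1.cfc_eq, IsHermitian.cfc,
    Unitary.conjStarAlgAut_apply, PosSemidef.sqrt]
  simp only [Real.sqrt]

lemma PosSemidef.inv_sqrt_mul_mul_inv_sqrt {𝕜 : Type*} [RCLike 𝕜] {P : Matrix n n 𝕜}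
    (hP : P.PosSemidef) (hPu : IsUnit P) : (CFC.sqrt P)⁻¹ * P * (CFC.sqrt P)⁻¹ = 1 := by
  have hdet := (isUnit_iff_isUnit_det _).mp ((CFC.isUnit_sqrt_iff P hP.nonneg).mpr hPu)
  nth_rw 2 [← CFC.sqrt_mul_sqrt_self P hP.nonneg]
  rw [← mul_assoc, nonsing_inv_mul _ hdet, one_mul, mul_nonsing_inv _ hdet]

lemma div_smul_le_add_smul_one_sub {A B : Matrix n n ℝ} {σ l : ℝ} (hBA : B ≤ A)
    (hAσ : A ≤ algebraMap ℝ _ σ) (hσ : 0 ≤ σ) (hl : 0 < l) :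
    (l / (σ + l)) • (A + l • 1) ≤ A + l • 1 - B := by
  have hc : l = l / (σ + l) * (σ + l) := (div_mul_cancel₀ l (by positivity)).symm
  rw [Algebra.algebraMap_eq_smul_one] at hAσ
  have hdecomp : A + l • 1 - B - (l / (σ + l)) • (A + l • 1) =
      (A - B) + (l / (σ + l)) • (σ • 1 - A) := by
    linear_combination (norm := module) hc • (1 : Matrix n n ℝ)
  rw [le_iff, hdecomp]
  exact hBA.add (hAσ.smul (by positivity))

end Matrix

theorem stmt1_general (d : ℕ) (A B : Matrix (Fin d) (Fin d) ℝ) (l σ : ℝ)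
    (hB : B.PosSemidef) (hAB : (A - B).PosSemidef)
    (hl : 0 < l)
    (hP : (A + l • (1 : Matrix (Fin d) (Fin d) ℝ)).PosSemidef)
    (hσ_mem : σ ∈ spectrum ℝ A) (hσ_max : ∀ μ ∈ spectrum ℝ A, μ ≤ σ) :
    IsUnit (1 - hP.sqrt⁻¹ * B * hP.sqrt⁻¹) ∧
      ∀ μ ∈ spectrum ℝ ((1 - hP.sqrt⁻¹ * B * hP.sqrt⁻¹)⁻¹ - 1),
        μ ∈ Set.Icc (0 : ℝ) (σ / l) := by
  have hA : 0 ≤ A := hB.nonneg.trans hAB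
  have hσ : 0 ≤ σ := spectrum_nonneg_of_nonneg hA hσ_mem
  have hAσ : A ≤ algebraMap ℝ _ σ := (le_algebraMap_iff_spectrum_le (.of_nonneg hA)).mpr hσ_max
  rw [hP.sqrt_eq_cfcSqrt]
  set S := CFC.sqrt (A + l • (1 : Matrix (Fin d) (Fin d) ℝ))
  have hSinv : IsSelfAdjoint S⁻¹ := hP.inv_sqrt ▸ .of_nonneg (CFC.sqrt_nonneg _)
  have hSPS : S⁻¹ * (A + l • 1) * S⁻¹ = 1 := hP.inv_sqrt_mul_mul_inv_sqrt
    (PosDef.posSemidef_add hA.posSemidef (PosDef.one.smul hl)).isUnit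
  set c := l / (σ + l)
  have hlower : algebraMap ℝ _ c ≤ 1 - S⁻¹ * B * S⁻¹ := by
    have h := hSinv.conjugate_le_conjugate (div_smul_le_add_smul_one_sub hAB hAσ hσ hl)
    rwa [Matrix.mul_sub, Matrix.sub_mul, mul_smul_comm, smul_mul_assoc, hSPS,
      ← Algebra.algebraMap_eq_smul_one] at h
  have hupper : 1 - S⁻¹ * B * S⁻¹ ≤ algebraMap ℝ _ 1 := by
    rw [map_one]
    exact sub_le_self _ (hSinv.conjugate_nonneg hB.nonneg)
  have hspec := spectrum_subset_Icc_of_le hlower hupper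
  have hc : 0 < c := by positivity
  obtain ⟨u, hu⟩ := spectrum.isUnit_of_zero_notMem ℝ fun h => (hc.trans_le (hspec h).1).false
  rw [← hu, ← coe_units_inv]
  refine ⟨u.isUnit, fun μ hμ => ?_⟩
  have h := spectrum_inv_sub_one_subset_Icc u hc (hu ▸ hspec) hμ
  rwa [show c⁻¹ - 1 = σ / l by simp only [c]; field_simp; ring] at h

/-- With `A ≻ 0` symmetric, `0 ⪯ B ⪯ A`, `λ > 0`, the matrix
`D := (I − (A+λI)⁻¹ᐟ² B (A+λI)⁻¹ᐟ²)⁻¹ − I` is well-defined (the inverse exists) and has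
eigenvalues in `[0, σ/λ]`, where `σ` is the largest eigenvalue of `A`. -/
theorem stmt1 (d : ℕ) (A B : Matrix (Fin d) (Fin d) ℝ) (l σ : ℝ)
    (hA : A.PosDef) (hB : B.PosSemidef) (hAB : (A - B).PosSemidef)
    (hl : 0 < l)
    (hP : (A + l • (1 : Matrix (Fin d) (Fin d) ℝ)).PosSemidef)
    (hσ_mem : σ ∈ spectrum ℝ A) (hσ_max : ∀ μ ∈ spectrum ℝ A, μ ≤ σ) :
    IsUnit (1 - hP.sqrt⁻¹ * B * hP.sqrt⁻¹) ∧
      ∀ μ ∈ spectrum ℝ ((1 - hP.sqrt⁻¹ * B * hP.sqrt⁻¹)⁻¹ - 1),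
        μ ∈ Set.Icc (0 : ℝ) (σ / l) :=
  stmt1_general d A B l σ hB hAB hl hP hσ_mem hσ_max
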